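/- Domain of the exact EPF: in a finite two-player perfect-information game tree, for every state s the domain of the EPF U_s (the set of μ with U_s(μ) > -∞) equals the closed interval [V̲(s), V̄(s)], where V̲(s) is the follower's backward-induction value against the grim (follower-payoff-minimizing) leader strategy and V̄(s) is the follower's backward-induction value under the joint altruistic (follower-payoff-maximizing) strategy profile. -/

import Mathlib

/-- A finite two-player perfect-information game tree: leaves carry payoffs
`(r₁, r₂)`; internal nodes belong to the leader (`isLeader = true`) or the
follower, and have a nonempty (finite) family of children. -/
inductive GTree : Type
  | leaf (r₁ r₂ : ℝ) : GTree
  | node (isLeader : Bool) (n : ℕ) (children : Fin (n + 1) → GTree) : GTree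

/-- Follower's backward-induction value against the grim (follower-payoff-minimizing)
leader strategy. -/
noncomputable def GTree.grim : GTree → ℝ
  | .leaf _ r₂ => r₂
  | .node isLeader _ c =>
      if isLeader then
        Finset.univ.inf' Finset.univ_nonempty (fun i => (c i).grim)
      else
        Finset.univ.sup' Finset.univ_nonempty (fun i => (c i).grim)

/-- Follower's backward-induction value under the joint altruistic
(follower-payoff-maximizing) strategy profile. -/
noncomputable def GTree.alt : GTree → ℝ
  | .leaf _ r₂ => r₂
  | .node _ _ c => Finset.univ.sup' Finset.univ_nonempty (fun i => (c i).alt)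

def ConcaveE (g : ℝ → EReal) : Prop :=
  ∀ x y t : ℝ, 0 ≤ t → t ≤ 1 →
    (t : EReal) * g x + ((1 - t : ℝ) : EReal) * g y ≤ g (t * x + (1 - t) * y)

/-- Upper concave envelope of an extended-real-valued function. -/
noncomputable def concE (f : ℝ → EReal) : ℝ → EReal :=
  fun μ => ⨅ h : {h : ℝ → EReal // ConcaveE h ∧ ∀ x, f x ≤ h x}, (h : ℝ → EReal) μ

/-- Left truncation at an extended-real threshold. -/
noncomputable def truncE' (g : ℝ → EReal) (t : EReal) : ℝ → EReal :=
  fun μ => if t ≤ (μ : EReal) then g μ else ⊥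

/-- Minimum required incentive of the child `i` among the family `c`:
the maximum grim value over the *other* children (`⊥` if there are none). -/
noncomputable def tauOf {n : ℕ} (c : Fin (n + 1) → GTree) (i : Fin (n + 1)) : EReal :=
  ⨆ (j : Fin (n + 1)) (_ : j ≠ i), ((c j).grim : EReal)

/-- The Enforceable Payoff Frontier (EPF), defined by backward induction:
degenerate at leaves; upper concave envelope of the children's EPFs at leader
nodes; upper concave envelope of the left-truncated children's EPFs at follower
nodes. -/
noncomputable def GTree.epf : GTree → ℝ → EReal
  | .leaf r₁ r₂ => fun μ => if μ = r₂ then (r₁ : EReal) else ⊥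
  | .node isLeader _ c =>
      if isLeader then
        concE (fun μ => ⨆ i, (c i).epf μ)
      else
        concE (fun μ => ⨆ i, truncE' ((c i).epf) (tauOf c i) μ)

/-- Number of leaves of the subtree. -/
def GTree.numLeaves : GTree → ℕ
  | .leaf _ _ => 1
  | .node _ _ c => ∑ i, (c i).numLeaves

/-!
The domain of a concave envelope is the convex hull of the domain of the function it envelops,
so at every internal node only the extreme points of the pre-envelope's domain matter. At a leader
node that domain is the union of the children's intervals `[V̲ᵢ, V̄ᵢ]`, whose hull is
`[minᵢ V̲ᵢ, maxᵢ V̄ᵢ]`. At a follower node, truncating child `i` at `τᵢ = max_{j ≠ i} V̲ⱼ` leaves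
`[maxⱼ V̲ⱼ, V̄ᵢ]`, with hull `[maxⱼ V̲ⱼ, maxⱼ V̄ⱼ]`; it is nonempty because `V̲ ≤ V̄` everywhere.
-/

open Set

lemma convex_comb_le_concE (f : ℝ → EReal) {x y t : ℝ} (ht₀ : 0 ≤ t) (ht₁ : t ≤ 1) :
    (t : EReal) * f x + ((1 - t : ℝ) : EReal) * f y ≤ concE f (t * x + (1 - t) * y) :=
  le_iInf fun ⟨h, hconc, hle⟩ =>
    calc (t : EReal) * f x + ((1 - t : ℝ) : EReal) * f y
        ≤ (t : EReal) * h x + ((1 - t : ℝ) : EReal) * h y := by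
          gcongr <;> apply hle
      _ ≤ h (t * x + (1 - t) * y) := hconc x y t ht₀ ht₁

lemma concE_le {f h : ℝ → EReal} (hconc : ConcaveE h) (hle : ∀ x, f x ≤ h x) (μ : ℝ) :
    concE f μ ≤ h μ :=
  iInf_le (fun h : {h : ℝ → EReal // ConcaveE h ∧ ∀ x, f x ≤ h x} => (h : ℝ → EReal) μ)
    ⟨h, hconc, hle⟩

lemma Convex.concaveE_ite_top_bot {S : Set ℝ} [DecidablePred (· ∈ S)] (hS : Convex ℝ S) :
    ConcaveE (fun x => if x ∈ S then ⊤ else ⊥) := by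
  intro x y t ht₀ ht₁
  by_cases hz : t * x + (1 - t) * y ∈ S
  · simp only [hz, if_true, le_top]
  rcases ht₀.eq_or_lt with rfl | ht₀
  · simp_all
  rcases ht₁.eq_or_lt with rfl | ht₁
  · simp_all
  have hxy : x ∉ S ∨ y ∉ S := by
    by_contra! h
    exact hz (hS h.1 h.2 ht₀.le (by linarith) (by ring))
  rcases hxy with hx | hy
  · simp only [hx, hz, if_false, EReal.coe_mul_bot_of_pos ht₀, EReal.bot_add, le_refl]
  · simp only [hy, hz, if_false, EReal.coe_mul_bot_of_pos (sub_pos.2 ht₁), EReal.add_bot, le_refl]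

lemma concE_ne_bot_of_mem_Icc {f : ℝ → EReal} {a b μ : ℝ} (ha : f a ≠ ⊥) (hb : f b ≠ ⊥)
    (hμ : μ ∈ Icc a b) : concE f μ ≠ ⊥ := by
  obtain ⟨s, t, hs, ht, hst, rfl⟩ : μ ∈ segment ℝ a b := by
    rwa [segment_eq_Icc (hμ.1.trans hμ.2)]
  obtain rfl : t = 1 - s := by linarith
  have hcomb_ne_bot {r : ℝ} (hr : 0 ≤ r) {v : EReal} (hv : v ≠ ⊥) : (r : EReal) * v ≠ ⊥ :=
    (EReal.mul_ne_bot _ _).2 ⟨.inl (EReal.coe_ne_bot r), .inr hv, .inl (EReal.coe_ne_top r),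
      .inl (EReal.coe_nonneg.2 hr)⟩
  refine ne_bot_of_le_ne_bot ?_ (convex_comb_le_concE f hs (by linarith))
  exact EReal.add_ne_bot_iff.2 ⟨hcomb_ne_bot hs ha, hcomb_ne_bot ht hb⟩

lemma concE_eq_bot_of_notMem_Icc {f : ℝ → EReal} {a b μ : ℝ}
    (hf : ∀ x, f x ≠ ⊥ → x ∈ Icc a b) (hμ : μ ∉ Icc a b) : concE f μ = ⊥ := by
  refine le_bot_iff.1 ((concE_le (convex_Icc a b).concaveE_ite_top_bot (fun x => ?_) μ).trans ?_)
  · by_cases hx : x ∈ Icc a b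
    · simp [hx]
    · simp [hx, not_imp_comm.1 (hf x) hx]
  · simp [hμ]

lemma concE_domain {f : ℝ → EReal} {a b : ℝ} (ha : f a ≠ ⊥) (hb : f b ≠ ⊥)
    (hf : ∀ x, f x ≠ ⊥ → x ∈ Icc a b) :
    {μ | concE f μ ≠ ⊥} = Icc a b :=
  Set.ext fun _ => ⟨not_imp_comm.1 (concE_eq_bot_of_notMem_Icc hf), concE_ne_bot_of_mem_Icc ha hb⟩

lemma truncE'_ne_bot_iff {g : ℝ → EReal} {t : EReal} {μ : ℝ} :
    truncE' g t μ ≠ ⊥ ↔ t ≤ μ ∧ g μ ≠ ⊥ := by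
  unfold truncE'
  split_ifs with h <;> simp [h]

lemma tauOf_le_iff {n : ℕ} {c : Fin (n + 1) → GTree} {i : Fin (n + 1)} {x : ℝ} :
    tauOf c i ≤ x ↔ ∀ j ≠ i, (c j).grim ≤ x := by
  simp only [tauOf, iSup₂_le_iff, EReal.coe_le_coe_iff]

namespace GTree

lemma grim_le_alt (T : GTree) : T.grim ≤ T.alt := by
  induction T with
  | leaf => simp [grim, alt]
  | node isLeader n c ih =>
    have grim_le_altMax (i) :
        (c i).grim ≤ Finset.univ.sup' Finset.univ_nonempty (fun j => (c j).alt) :=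
      (ih i).trans (Finset.le_sup' (fun j => (c j).alt) (Finset.mem_univ i))
    cases isLeader <;> simp only [grim, alt, Bool.false_eq_true, if_true, if_false]
    · exact Finset.sup'_le _ _ fun i _ => grim_le_altMax i
    · exact (Finset.inf'_le _ (Finset.mem_univ 0)).trans (grim_le_altMax 0)

variable {n : ℕ} {c : Fin (n + 1) → GTree}

lemma epf_domain_leaf (r₁ r₂ : ℝ) :
    {μ | (leaf r₁ r₂).epf μ ≠ ⊥} = Icc (leaf r₁ r₂).grim (leaf r₁ r₂).alt := by
  ext μ
  simp only [epf, grim, alt, Icc_self, mem_ofPred_eq, mem_singleton_iff]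
  split_ifs with h <;> simp [h]

lemma epf_domain_leader (ih : ∀ i μ, (c i).epf μ ≠ ⊥ ↔ μ ∈ Icc (c i).grim (c i).alt) :
    {μ | (node true n c).epf μ ≠ ⊥} = Icc (node true n c).grim (node true n c).alt := by
  have hdom (μ : ℝ) : (⨆ i, (c i).epf μ) ≠ ⊥ ↔ ∃ i, μ ∈ Icc (c i).grim (c i).alt := by
    simp only [ne_eq, iSup_eq_bot, not_forall, ← ih]
  obtain ⟨i₀, -, hi₀⟩ := Finset.exists_mem_eq_inf' Finset.univ_nonempty (fun i => (c i).grim)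
  obtain ⟨i₁, -, hi₁⟩ := Finset.exists_mem_eq_sup' Finset.univ_nonempty (fun i => (c i).alt)
  simp only [epf, grim, alt, if_true]
  refine concE_domain ((hdom _).2 ⟨i₀, ?_⟩) ((hdom _).2 ⟨i₁, ?_⟩) fun x hx => ?_
  · rw [hi₀]; exact ⟨le_rfl, (c i₀).grim_le_alt⟩
  · rw [hi₁]; exact ⟨(c i₁).grim_le_alt, le_rfl⟩
  · obtain ⟨i, hgrim, halt⟩ := (hdom x).1 hx
    exact ⟨(Finset.inf'_le _ (Finset.mem_univ i)).trans hgrim,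
      halt.trans (Finset.le_sup' (fun j => (c j).alt) (Finset.mem_univ i))⟩

lemma epf_domain_follower (ih : ∀ i μ, (c i).epf μ ≠ ⊥ ↔ μ ∈ Icc (c i).grim (c i).alt) :
    {μ | (node false n c).epf μ ≠ ⊥} = Icc (node false n c).grim (node false n c).alt := by
  set grimMax := Finset.univ.sup' Finset.univ_nonempty (fun i => (c i).grim)
  set altMax := Finset.univ.sup' Finset.univ_nonempty (fun i => (c i).alt)
  -- truncation at `τᵢ` raises the lower end of every child's interval to `grimMax`
  have hdom (μ : ℝ) : (⨆ i, truncE' (c i).epf (tauOf c i) μ) ≠ ⊥ ↔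
      ∃ i, grimMax ≤ μ ∧ μ ≤ (c i).alt := by
    simp only [ne_eq, iSup_eq_bot, not_forall]
    refine exists_congr fun i => ?_
    rw [← ne_eq, truncE'_ne_bot_iff, ih, tauOf_le_iff, Finset.sup'_le_iff]
    constructor
    · rintro ⟨hτ, hgrim, halt⟩
      exact ⟨fun j _ => (eq_or_ne j i).elim (· ▸ hgrim) (hτ j), halt⟩
    · rintro ⟨hmax, halt⟩
      exact ⟨fun j _ => hmax j (Finset.mem_univ j), hmax i (Finset.mem_univ i), halt⟩
  have grimMax_le_altMax : grimMax ≤ altMax :=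
    Finset.sup'_mono_fun fun i _ => (c i).grim_le_alt
  obtain ⟨i₁, -, hi₁⟩ := Finset.exists_mem_eq_sup' Finset.univ_nonempty (fun i => (c i).alt)
  simp only [epf, grim, alt, Bool.false_eq_true, if_false]
  refine concE_domain ((hdom _).2 ⟨i₁, le_rfl, ?_⟩) ((hdom _).2 ⟨i₁, grimMax_le_altMax, ?_⟩)
    fun x hx => ?_
  · rw [← hi₁]; exact grimMax_le_altMax
  · rw [hi₁]
  · obtain ⟨i, hgrim, halt⟩ := (hdom x).1 hx
    exact ⟨hgrim, halt.trans (Finset.le_sup' (fun j => (c j).alt) (Finset.mem_univ i))⟩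

end GTree

/-- Domain of the exact EPF: for every state, the set where the EPF exceeds `-∞`
is exactly the closed interval from the grim follower value to the altruistic
follower value. -/
theorem epf_domain (T : GTree) :
    {μ : ℝ | T.epf μ ≠ ⊥} = Set.Icc T.grim T.alt := by
  induction T with
  | leaf r₁ r₂ => exact GTree.epf_domain_leaf r₁ r₂
  | node isLeader n c ih =>
    cases isLeader
    · exact GTree.epf_domain_follower fun i => Set.ext_iff.1 (ih i)
    · exact GTree.epf_domain_leader fun i => Set.ext_iff.1 (ih i)
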